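/- arXiv:2604.17198 — 4 statements merged into one kernel-verified Lean document; each statement's English description precedes it below -/
import Mathlib

section
/- Let C be a monotone, zero-based, hierarchically consistent cost family on d dimensions and let Q < C_0(N 0). Let x̄ = FindPartition(Q) with residuals R_0, …, R_d. Then for every m < d: (i) R_m + Σ_{k<m} C_k(x_k | x_0, …, x_{k−1}) = Q; (ii) R_m < C_m(N m | x_0, …, x_{m−1}); (iii) C_m(x_m | x_0, …, x_{m−1}) ≤ R_m; and (iv) R_m < C_m(x_m + 1 | x_0, …, x_{m−1}). -/
noncomputable section

open scoped Classical
open Finset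

namespace Nacho

/-- A prefix `p` is valid up to length `m` if its entries below `m` are within the extents. -/
def ValidPrefix {d : ℕ} (N : Fin d → ℕ) (m : ℕ) (p : Fin d → ℕ) : Prop :=
  ∀ k : Fin d, (k : ℕ) < m → p k < N k

/-- A family of cost functions only depends on the prefix below its level. -/
def PrefixDep {d : ℕ} (C : Fin d → (Fin d → ℕ) → ℕ → ℕ) : Prop :=
  ∀ (m : Fin d) (p p' : Fin d → ℕ) (x : ℕ),
    (∀ k : Fin d, (k : ℕ) < (m : ℕ) → p k = p' k) → C m p x = C m p' x

/-- Monotone cost family. -/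
def IsMonotoneFam {d : ℕ} (N : Fin d → ℕ) (C : Fin d → (Fin d → ℕ) → ℕ → ℕ) : Prop :=
  ∀ (m : Fin d) (p : Fin d → ℕ), ValidPrefix N (m : ℕ) p →
    ∀ x : ℕ, x < N m → C m p x ≤ C m p (x + 1)

/-- Zero-based cost family. -/
def IsZeroBased {d : ℕ} (N : Fin d → ℕ) (C : Fin d → (Fin d → ℕ) → ℕ → ℕ) : Prop :=
  ∀ (m : Fin d) (p : Fin d → ℕ), ValidPrefix N (m : ℕ) p → C m p 0 = 0

/-- Hierarchically consistent cost family. -/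
def IsHierConsistent {d : ℕ} (N : Fin d → ℕ) (C : Fin d → (Fin d → ℕ) → ℕ → ℕ) : Prop :=
  ∀ (m : Fin d) (h : (m : ℕ) + 1 < d) (p : Fin d → ℕ), ValidPrefix N (m : ℕ) p →
    ∀ x : ℕ, x < N m →
      C m p (x + 1)
        = C m p x + C ⟨(m : ℕ) + 1, h⟩ (Function.update p m x) (N ⟨(m : ℕ) + 1, h⟩)

/-- One step of the hierarchical search: at level `m`, pick the greatest in-range coordinate
whose cost does not exceed the residual, record it, and subtract its cost. -/
def partStep {d : ℕ} (N : Fin d → ℕ) (C : Fin d → (Fin d → ℕ) → ℕ → ℕ) (m : ℕ)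
    (st : (Fin d → ℕ) × ℕ) : (Fin d → ℕ) × ℕ :=
  if h : m < d then
    let x := Nat.findGreatest (fun y => C ⟨m, h⟩ st.1 y ≤ st.2) (N ⟨m, h⟩ - 1)
    (Function.update st.1 ⟨m, h⟩ x, st.2 - C ⟨m, h⟩ st.1 x)
  else st

/-- Partially-built coordinate and residual after the first `m` levels of `FindPartition`. -/
def partState {d : ℕ} (N : Fin d → ℕ) (C : Fin d → (Fin d → ℕ) → ℕ → ℕ) (Q : ℕ) :
    ℕ → (Fin d → ℕ) × ℕ
  | 0 => (fun _ => 0, Q)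
  | m + 1 => partStep N C m (partState N C Q m)

/-- `FindPartition` of the hierarchical search partitioning algorithm. -/
def findPartition {d : ℕ} (N : Fin d → ℕ) (C : Fin d → (Fin d → ℕ) → ℕ → ℕ) (Q : ℕ) :
    Fin d → ℕ :=
  (partState N C Q d).1

/-- Residual cost `R_m` of `FindPartition`. -/
def residual {d : ℕ} (N : Fin d → ℕ) (C : Fin d → (Fin d → ℕ) → ℕ → ℕ) (Q : ℕ) (m : ℕ) : ℕ :=
  (partState N C Q m).2

/-- Total cost of a coordinate tuple. -/
def totalCost {d : ℕ} (C : Fin d → (Fin d → ℕ) → ℕ → ℕ) (y : Fin d → ℕ) : ℕ :=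
  ∑ m : Fin d, C m y (y m)

/-- Strict lexicographic order on coordinate tuples. -/
def LexLt {d : ℕ} (x y : Fin d → ℕ) : Prop :=
  ∃ m : Fin d, (∀ k : Fin d, (k : ℕ) < (m : ℕ) → x k = y k) ∧ x m < y m

/-- Reflexive lexicographic order on coordinate tuples. -/
def LexLe {d : ℕ} (x y : Fin d → ℕ) : Prop :=
  LexLt x y ∨ x = y

/-- `Δ` bounds the cost gap between adjacent coordinates at the last level. -/
def LastLevelGapBound {d : ℕ} (N : Fin d → ℕ) (C : Fin d → (Fin d → ℕ) → ℕ → ℕ) (Δ : ℕ) :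
    Prop :=
  ∀ (hd : 0 < d) (p : Fin d → ℕ), ValidPrefix N (d - 1) p →
    ∀ x : ℕ, x < N ⟨d - 1, Nat.sub_lt hd Nat.one_pos⟩ →
      C ⟨d - 1, Nat.sub_lt hd Nat.one_pos⟩ p (x + 1)
        - C ⟨d - 1, Nat.sub_lt hd Nat.one_pos⟩ p x ≤ Δ

/-- The count cost family of a finite set of nonzero coordinates. -/
def countCost {d : ℕ} (N : Fin d → ℕ) (S : Finset ((m : Fin d) → Fin (N m))) :
    Fin d → (Fin d → ℕ) → ℕ → ℕ :=
  fun m p x =>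
    (S.filter fun c =>
      (∀ k : Fin d, (k : ℕ) < (m : ℕ) → (c k : ℕ) = p k) ∧ (c m : ℕ) < x).card

/-- The summed count family of finitely many finite sets of nonzero coordinates. -/
def summedCost {d : ℕ} (N : Fin d → ℕ) {t : ℕ}
    (S : Fin t → Finset ((m : Fin d) → Fin (N m))) :
    Fin d → (Fin d → ℕ) → ℕ → ℕ :=
  fun m p x => ∑ i, countCost N (S i) m p x

section Aux

variable {d : ℕ} (N : Fin d → ℕ) (C : Fin d → (Fin d → ℕ) → ℕ → ℕ) (Q : ℕ)

lemma partState_succ_eq (m : ℕ) (k : Fin d) (hk : (k : ℕ) < m) :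
    (partState N C Q (m + 1)).1 k = (partState N C Q m).1 k := by
  show (partStep N C m (partState N C Q m)).1 k = _
  unfold partStep
  split
  · next h =>
    exact Function.update_of_ne (by simp [Fin.ext_iff]; omega) _ _
  · rfl

lemma partState_stable (m : ℕ) : ∀ m', m ≤ m' → ∀ k : Fin d, (k : ℕ) < m →
    (partState N C Q m').1 k = (partState N C Q m).1 k := by
  intro m'
  induction m' with
  | zero => intro hm k hk; omega
  | succ n ih =>
    intro hm k hk
    rcases Nat.lt_or_ge m (n + 1) with h | h
    · have hmn : m ≤ n := by omega
      rw [partState_succ_eq N C Q n k (by omega)]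
      exact ih hmn k hk
    · have : m = n + 1 := by omega
      subst this; rfl

lemma findPartition_eq_state (m : ℕ) (hm : m ≤ d) (k : Fin d) (hk : (k : ℕ) < m) :
    findPartition N C Q k = (partState N C Q m).1 k :=
  partState_stable N C Q m d hm k hk

lemma partState_lt (hN : ∀ m, 1 ≤ N m) (m : ℕ) (k : Fin d) (hk : (k : ℕ) < m) :
    (partState N C Q m).1 k < N k := by
  induction m with
  | zero => omega
  | succ n ih =>
    rcases Nat.lt_or_ge (k : ℕ) n with h | h
    · rw [partState_succ_eq N C Q n k h]; exact ih h
    · have hkn : (k : ℕ) = n := by omega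
      have hnd : n < d := by omega
      have hkeq : k = ⟨n, hnd⟩ := Fin.ext (by simpa using hkn)
      show (partStep N C n (partState N C Q n)).1 k < N k
      unfold partStep
      rw [dif_pos hnd]
      subst hkeq
      simp only [Function.update_self]
      have h1 := Nat.findGreatest_le
        (P := fun y => C ⟨n, hnd⟩ (partState N C Q n).1 y ≤ (partState N C Q n).2)
        (N ⟨n, hnd⟩ - 1)
      have h2 := hN (⟨n, hnd⟩ : Fin d)
      omega

lemma valid_state (hN : ∀ m, 1 ≤ N m) (m : ℕ) :
    ValidPrefix N m (partState N C Q m).1 :=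
  fun k hk => partState_lt N C Q hN m k hk

lemma fp_lt (hN : ∀ m, 1 ≤ N m) (k : Fin d) : findPartition N C Q k < N k :=
  partState_lt N C Q hN d k k.isLt

lemma C_fp (hPD : PrefixDep C) (m : Fin d) (y : ℕ) :
    C m (findPartition N C Q) y = C m (partState N C Q (m : ℕ)).1 y :=
  hPD m _ _ y (fun k hk => findPartition_eq_state N C Q (m : ℕ) (le_of_lt m.isLt) k hk)

lemma step_facts (hN : ∀ m, 1 ≤ N m) (hZero : IsZeroBased N C) (m : ℕ) (h : m < d)
    (hii : (partState N C Q m).2 < C ⟨m, h⟩ (partState N C Q m).1 (N ⟨m, h⟩)) :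
    C ⟨m, h⟩ (partState N C Q m).1 (findPartition N C Q ⟨m, h⟩) ≤ (partState N C Q m).2 ∧
    (partState N C Q m).2
      < C ⟨m, h⟩ (partState N C Q m).1 (findPartition N C Q ⟨m, h⟩ + 1) ∧
    (partState N C Q (m + 1)).2
      = (partState N C Q m).2
        - C ⟨m, h⟩ (partState N C Q m).1 (findPartition N C Q ⟨m, h⟩) ∧
    (partState N C Q (m + 1)).1
      = Function.update (partState N C Q m).1 ⟨m, h⟩ (findPartition N C Q ⟨m, h⟩) := by
  set st := partState N C Q m with hst
  set x := Nat.findGreatest (fun y => C ⟨m, h⟩ st.1 y ≤ st.2) (N ⟨m, h⟩ - 1) with hx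
  have hstep : partState N C Q (m + 1)
      = (Function.update st.1 ⟨m, h⟩ x, st.2 - C ⟨m, h⟩ st.1 x) := by
    show partStep N C m st = _
    unfold partStep
    rw [dif_pos h]
  have hfp : findPartition N C Q ⟨m, h⟩ = x := by
    rw [findPartition_eq_state N C Q (m + 1) h ⟨m, h⟩ (by simp), hstep]
    simp
  rw [hfp, hstep]
  refine ⟨?_, ?_, rfl, rfl⟩
  · have h0 : C ⟨m, h⟩ st.1 0 ≤ st.2 := by
      rw [hZero ⟨m, h⟩ st.1 (valid_state N C Q hN m)]; exact Nat.zero_le _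
    exact Nat.findGreatest_spec (P := fun y => C ⟨m, h⟩ st.1 y ≤ st.2) (Nat.zero_le _) h0
  · by_cases hc : x + 1 ≤ N ⟨m, h⟩ - 1
    · have := Nat.findGreatest_is_greatest (P := fun y => C ⟨m, h⟩ st.1 y ≤ st.2)
        (by omega : x < x + 1) hc
      omega
    · have hxe : x + 1 = N ⟨m, h⟩ := by
        have h1 := Nat.findGreatest_le
          (P := fun y => C ⟨m, h⟩ st.1 y ≤ st.2) (N ⟨m, h⟩ - 1)
        have h2 := hN (⟨m, h⟩ : Fin d)
        omega
      rw [hxe]; exact hii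

lemma inv_lemma (hd : 0 < d) (hN : ∀ m, 1 ≤ N m) (hPD : PrefixDep C)
    (hZero : IsZeroBased N C) (hHC : IsHierConsistent N C)
    (hQ : Q < C ⟨0, hd⟩ (fun _ => 0) (N ⟨0, hd⟩)) :
    ∀ m : ℕ, m ≤ d →
      ((partState N C Q m).2 +
        (∑ k ∈ Finset.univ.filter (fun k : Fin d => (k : ℕ) < m),
          C k (findPartition N C Q) (findPartition N C Q k)) = Q) ∧
      ∀ h : m < d, (partState N C Q m).2 < C ⟨m, h⟩ (partState N C Q m).1 (N ⟨m, h⟩) := by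
  intro m
  induction m with
  | zero =>
    intro _
    constructor
    · simp [partState]
    · intro h; exact hQ
  | succ n ih =>
    intro hn1
    have hnd : n < d := by omega
    obtain ⟨ih1, ih2⟩ := ih (le_of_lt hnd)
    obtain ⟨f3, f4, fR, fP⟩ := step_facts N C Q hN hZero n hnd (ih2 hnd)
    have hCfp : C ⟨n, hnd⟩ (findPartition N C Q) (findPartition N C Q ⟨n, hnd⟩)
        = C ⟨n, hnd⟩ (partState N C Q n).1 (findPartition N C Q ⟨n, hnd⟩) :=
      C_fp N C Q hPD ⟨n, hnd⟩ (findPartition N C Q ⟨n, hnd⟩)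
    constructor
    · have hsplit : (Finset.univ.filter fun k : Fin d => (k : ℕ) < n + 1)
          = insert ⟨n, hnd⟩ (Finset.univ.filter fun k : Fin d => (k : ℕ) < n) := by
        ext k
        simp only [Finset.mem_filter, Finset.mem_insert, Finset.mem_univ, true_and,
          Fin.ext_iff]
        omega
      rw [hsplit, Finset.sum_insert (by simp)]
      rw [fR]
      omega
    · intro h'
      have hx : findPartition N C Q ⟨n, hnd⟩ < N ⟨n, hnd⟩ := fp_lt N C Q hN _
      have hhc := hHC ⟨n, hnd⟩ h' (partState N C Q n).1 (valid_state N C Q hN n)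
        (findPartition N C Q ⟨n, hnd⟩) hx
      simp only [Fin.val_mk] at hhc ⊢
      rw [fR, fP]
      omega

end Aux

/-- invariants of `FindPartition`: at every level `m`, (i) the residual plus the
cost already accounted for equals `Q`, (ii) the residual is less than the full cost of the
remaining subspace, (iii) the cost at the chosen coordinate is at most the residual, and
(iv) the residual is less than the cost at the next coordinate. -/
theorem stmt3 {d : ℕ} (hd : 0 < d) {N : Fin d → ℕ} (hN : ∀ m, 1 ≤ N m)
    (C : Fin d → (Fin d → ℕ) → ℕ → ℕ) (hPD : PrefixDep C)
    (hMono : IsMonotoneFam N C) (hZero : IsZeroBased N C) (hHC : IsHierConsistent N C)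
    (Q : ℕ) (hQ : Q < C ⟨0, hd⟩ (fun _ => 0) (N ⟨0, hd⟩)) :
    ∀ m : Fin d,
      residual N C Q (m : ℕ) +
          (∑ k ∈ Finset.Iio m, C k (findPartition N C Q) (findPartition N C Q k)) = Q ∧
      residual N C Q (m : ℕ) < C m (findPartition N C Q) (N m) ∧
      C m (findPartition N C Q) (findPartition N C Q m) ≤ residual N C Q (m : ℕ) ∧
      residual N C Q (m : ℕ) < C m (findPartition N C Q) (findPartition N C Q m + 1) := by
  intro m
  have hmd : (m : ℕ) < d := m.isLt
  obtain ⟨i1, i2⟩ := inv_lemma N C Q hd hN hPD hZero hHC hQ (m : ℕ) (le_of_lt hmd)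
  have hme : (⟨(m : ℕ), hmd⟩ : Fin d) = m := rfl
  have i2' := i2 hmd
  obtain ⟨f3, f4, _, _⟩ := step_facts N C Q hN hZero (m : ℕ) hmd i2'
  have hIio : Finset.Iio m = Finset.univ.filter (fun k : Fin d => (k : ℕ) < (m : ℕ)) := by
    ext k
    simp only [Finset.mem_Iio, Finset.mem_filter, Finset.mem_univ, true_and, Fin.lt_def]
  refine ⟨by rw [hIio]; exact i1, ?_, ?_, ?_⟩
  · rw [C_fp N C Q hPD m (N m)]
    exact i2'
  · rw [C_fp N C Q hPD m (findPartition N C Q m)]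
    exact f3
  · rw [C_fp N C Q hPD m (findPartition N C Q m + 1)]
    exact f4

end Nacho
end
end

section
/- Let C be a monotone, zero-based, hierarchically consistent cost family on d dimensions. If Q ≤ Q' and Q' < C_0(N 0), then FindPartition(Q) ≤lex FindPartition(Q'); that is, the partition boundaries produced by independently executed searches are lexicographically ordered according to their query values. -/
noncomputable section

open scoped Classical
open Finset

namespace Nacho

lemma partStep_apply_ne {d : ℕ} (N : Fin d → ℕ) (C : Fin d → (Fin d → ℕ) → ℕ → ℕ)
    (m : ℕ) (st : (Fin d → ℕ) × ℕ) (k : Fin d) (hk : (k : ℕ) ≠ m) :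
    (partStep N C m st).1 k = st.1 k := by
  unfold partStep
  split
  · next h =>
    simp only
    rw [Function.update_of_ne]
    intro he
    apply hk
    rw [he]
  · rfl

/-- partition boundaries produced by independently executed searches are
lexicographically ordered according to their query values. -/
theorem stmt6 {d : ℕ} (hd : 0 < d) {N : Fin d → ℕ} (hN : ∀ m, 1 ≤ N m)
    (C : Fin d → (Fin d → ℕ) → ℕ → ℕ) (hPD : PrefixDep C)
    (hMono : IsMonotoneFam N C) (hZero : IsZeroBased N C) (hHC : IsHierConsistent N C)
    (Q Q' : ℕ) (hQQ' : Q ≤ Q') (hQ' : Q' < C ⟨0, hd⟩ (fun _ => 0) (N ⟨0, hd⟩)) :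
    LexLe (findPartition N C Q) (findPartition N C Q') := by
  suffices h : ∀ m : ℕ, m ≤ d →
      (((partState N C Q m).1 = (partState N C Q' m).1 ∧
        (partState N C Q m).2 ≤ (partState N C Q' m).2) ∨
      (∃ j : Fin d, (j : ℕ) < m ∧
        (∀ k : Fin d, (k : ℕ) < (j : ℕ) →
          (partState N C Q m).1 k = (partState N C Q' m).1 k) ∧
        (partState N C Q m).1 j < (partState N C Q' m).1 j)) by
    rcases h d le_rfl with ⟨h1, _⟩ | ⟨j, _, h2, h3⟩
    · right; exact h1
    · left; exact ⟨j, h2, h3⟩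
  intro m
  induction m with
  | zero => intro _; left; exact ⟨rfl, hQQ'⟩
  | succ m ih =>
    intro hm
    have hmd : m < d := hm
    have hstep : ∀ R, partState N C R (m + 1) = partStep N C m (partState N C R m) :=
      fun _ => rfl
    rcases ih (le_of_lt hmd) with ⟨h1, h2⟩ | ⟨j, hj, h2, h3⟩
    · set st := partState N C Q m with hst
      set st' := partState N C Q' m with hst'
      set x := Nat.findGreatest (fun y => C ⟨m, hmd⟩ st.1 y ≤ st.2) (N ⟨m, hmd⟩ - 1) with hx
      set x' := Nat.findGreatest (fun y => C ⟨m, hmd⟩ st'.1 y ≤ st'.2) (N ⟨m, hmd⟩ - 1)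
        with hx'
      have hQ1 : (partState N C Q (m + 1)).1 = Function.update st.1 ⟨m, hmd⟩ x := by
        rw [hstep]; unfold partStep; rw [dif_pos hmd]
      have hQ2 : (partState N C Q (m + 1)).2 = st.2 - C ⟨m, hmd⟩ st.1 x := by
        rw [hstep]; unfold partStep; rw [dif_pos hmd]
      have hQ'1 : (partState N C Q' (m + 1)).1 = Function.update st'.1 ⟨m, hmd⟩ x' := by
        rw [hstep]; unfold partStep; rw [dif_pos hmd]
      have hQ'2 : (partState N C Q' (m + 1)).2 = st'.2 - C ⟨m, hmd⟩ st'.1 x' := by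
        rw [hstep]; unfold partStep; rw [dif_pos hmd]
      have hxx' : x ≤ x' := by
        rw [hx, hx']
        refine Nat.findGreatest_mono (fun y hy => ?_) le_rfl
        rw [← h1]
        exact le_trans hy h2
      rcases eq_or_lt_of_le hxx' with heq | hlt
      · left
        constructor
        · rw [hQ1, hQ'1, h1, heq]
        · rw [hQ2, hQ'2, h1, heq]
          exact Nat.sub_le_sub_right h2 _
      · right
        refine ⟨⟨m, hmd⟩, Nat.lt_succ_self m, fun k hk => ?_, ?_⟩
        · rw [hQ1, hQ'1]
          have hne : k ≠ (⟨m, hmd⟩ : Fin d) := by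
            intro he; rw [he] at hk; exact lt_irrefl _ hk
          rw [Function.update_of_ne hne, Function.update_of_ne hne, h1]
        · rw [hQ1, hQ'1, Function.update_self, Function.update_self]
          exact hlt
    · right
      refine ⟨j, lt_trans hj (Nat.lt_succ_self m), fun k hk => ?_, ?_⟩
      · rw [hstep, hstep, partStep_apply_ne _ _ _ _ _ (Nat.ne_of_lt (lt_trans hk hj)),
          partStep_apply_ne _ _ _ _ _ (Nat.ne_of_lt (lt_trans hk hj))]
        exact h2 k hk
      · rw [hstep, hstep, partStep_apply_ne _ _ _ _ _ (Nat.ne_of_lt hj),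
          partStep_apply_ne _ _ _ _ _ (Nat.ne_of_lt hj)]
        exact h3

end Nacho
end
end

section
/- Let C be a monotone, zero-based, hierarchically consistent cost family on d dimensions, let Δ be a last-level gap bound for the family, and let Q_l ≤ Q_u < C_0(N 0). Let x̄_l = FindPartition(Q_l) and x̄_u = FindPartition(Q_u). Then, as integers, |(C(x̄_u) − C(x̄_l)) − (Q_u − Q_l)| < Δ; that is, the cost of coiteration between the two returned boundaries differs from the query gap Q_u − Q_l by less than Δ. -/
noncomputable section

open scoped Classical
open Finset

namespace Nacho

/-!
FindPartition keeps the invariant `R_m < C_m(N m | x_0, …, x_{m-1})`. Given it, the greedy choice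
brackets the residual, `C_m(x_m) ≤ R_m < C_m(x_m + 1)`, and hierarchical consistency identifies the
gap `C_m(x_m + 1) - C_m(x_m)` with the full cost of level `m + 1`, which bounds `R_{m+1}`. Since
each level subtracts exactly its cost, `C(x̄) = Q - R_d`, and at the last level the gap bound gives
`0 ≤ R_d < Δ`. Subtracting the identities for `Q_u` and `Q_l` leaves `R_d(Q_l) - R_d(Q_u)`, of
absolute value less than `Δ`.
-/

theorem _root_.Nat.findGreatest_bracket {f : ℕ → ℕ} {n R x : ℕ} (h0 : f 0 = 0) (hR : R < f n)
    (hx : Nat.findGreatest (fun y => f y ≤ R) (n - 1) = x) :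
    x < n ∧ f x ≤ R ∧ R < f (x + 1) := by
  subst hx
  have hn : n ≠ 0 := by
    rintro rfl
    simp [h0] at hR
  have hxn := Nat.findGreatest_le (P := fun y => f y ≤ R) (n - 1)
  refine ⟨by omega,
    Nat.findGreatest_spec (P := fun y => f y ≤ R) (Nat.zero_le _) (by simp [h0]), ?_⟩
  rcases hxn.lt_or_eq with hlt | heq
  · exact not_le.mp (Nat.findGreatest_is_greatest (P := fun y => f y ≤ R) (by omega) hlt)
  · rwa [heq, Nat.sub_add_cancel (Nat.one_le_iff_ne_zero.mpr hn)]

theorem ValidPrefix.update {d : ℕ} {N : Fin d → ℕ} {p : Fin d → ℕ} {m : Fin d} {x : ℕ}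
    (hp : ValidPrefix N m p) (hx : x < N m) : ValidPrefix N (m + 1) (Function.update p m x) := by
  intro k hk
  rcases eq_or_ne k m with rfl | hkm
  · simpa using hx
  · rw [Function.update_of_ne hkm]
    exact hp k (by omega)

section FindPartition

variable {d : ℕ} {N : Fin d → ℕ} {C : Fin d → (Fin d → ℕ) → ℕ → ℕ} {Q : ℕ}

/-- The coordinate `x_m`, chosen from the state of FindPartition before level `m`. -/
def greedyCoord (N : Fin d → ℕ) (C : Fin d → (Fin d → ℕ) → ℕ → ℕ) (Q : ℕ) (m : Fin d) : ℕ :=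
  Nat.findGreatest (fun y => C m (partState N C Q m).1 y ≤ residual N C Q m) (N m - 1)

theorem partStep_fst_of_lt {n : ℕ} (st : (Fin d → ℕ) × ℕ) {k : Fin d} (hk : (k : ℕ) < n) :
    (partStep N C n st).1 k = st.1 k := by
  unfold partStep
  split_ifs
  · exact Function.update_of_ne (Fin.ne_of_val_ne hk.ne) _ _
  · rfl

theorem partState_fst_of_lt {k : Fin d} {m n : ℕ} (hkm : (k : ℕ) < m) (hmn : m ≤ n) :
    (partState N C Q n).1 k = (partState N C Q m).1 k := by
  induction n, hmn using Nat.le_induction with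
  | base => rfl
  | succ n hmn ih => rw [partState, partStep_fst_of_lt _ (by omega), ih]

theorem partState_succ (m : Fin d) :
    partState N C Q (m + 1) =
      (Function.update (partState N C Q m).1 m (greedyCoord N C Q m),
        residual N C Q m - C m (partState N C Q m).1 (greedyCoord N C Q m)) := by
  simp only [partState, partStep, m.isLt, dif_pos, Fin.eta]
  rfl

theorem residual_succ (m : Fin d) :
    residual N C Q (m + 1) =
      residual N C Q m - C m (partState N C Q m).1 (greedyCoord N C Q m) := by
  rw [residual, partState_succ]

theorem findPartition_apply (m : Fin d) : findPartition N C Q m = greedyCoord N C Q m := by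
  rw [findPartition, partState_fst_of_lt (Nat.lt_succ_self m) m.isLt, partState_succ]
  exact Function.update_self _ _ _

theorem cost_findPartition (hPD : PrefixDep C) (m : Fin d) (y : ℕ) :
    C m (findPartition N C Q) y = C m (partState N C Q m).1 y :=
  hPD m _ _ y fun _ hk => partState_fst_of_lt hk m.isLt.le

variable (hd : 0 < d) (hZero : IsZeroBased N C) (hHC : IsHierConsistent N C)
  (hQ : Q < C ⟨0, hd⟩ (fun _ => 0) (N ⟨0, hd⟩))
include hd hZero hHC hQ

theorem validPrefix_partState_and_residual_lt (m : Fin d) :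
    ValidPrefix N m (partState N C Q m).1 ∧
      residual N C Q m < C m (partState N C Q m).1 (N m) := by
  obtain ⟨m, hm⟩ := m
  induction m with
  | zero => exact ⟨fun _ hk => absurd hk (Nat.not_lt_zero _), hQ⟩
  | succ m ih =>
    set k : Fin d := ⟨m, by omega⟩
    obtain ⟨hvalid, hR⟩ : ValidPrefix N k (partState N C Q k).1 ∧
        residual N C Q k < C k (partState N C Q k).1 (N k) := ih k.isLt
    obtain ⟨hxN, hxR, hRx⟩ :=
      Nat.findGreatest_bracket (hZero k _ hvalid) hR (rfl : _ = greedyCoord N C Q k)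
    have hgap := hHC k hm _ hvalid _ hxN
    refine ⟨?_, ?_⟩
    · change ValidPrefix N (k + 1) (partState N C Q (k + 1)).1
      rw [partState_succ]
      exact hvalid.update hxN
    · change residual N C Q (k + 1) <
        C ⟨k + 1, hm⟩ (partState N C Q (k + 1)).1 (N ⟨k + 1, hm⟩)
      rw [residual_succ, partState_succ]
      dsimp only
      omega

theorem greedyCoord_bracket (m : Fin d) :
    greedyCoord N C Q m < N m ∧
      C m (partState N C Q m).1 (greedyCoord N C Q m) ≤ residual N C Q m ∧
      residual N C Q m < C m (partState N C Q m).1 (greedyCoord N C Q m + 1) :=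
  have h := validPrefix_partState_and_residual_lt hd hZero hHC hQ m
  Nat.findGreatest_bracket (hZero m _ h.1) h.2 rfl

theorem totalCost_findPartition (hPD : PrefixDep C) :
    (totalCost C (findPartition N C Q) : ℤ) = Q - residual N C Q d := by
  calc (totalCost C (findPartition N C Q) : ℤ)
      = ∑ m : Fin d, ((residual N C Q m : ℤ) - residual N C Q (m + 1)) := by
        rw [totalCost, Nat.cast_sum]
        refine sum_congr rfl fun m _ => ?_
        have := (greedyCoord_bracket hd hZero hHC hQ m).2.1
        rw [cost_findPartition hPD, findPartition_apply, residual_succ]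
        omega
    _ = Q - residual N C Q d := by
        rw [Fin.sum_univ_eq_sum_range (fun i => (residual N C Q i : ℤ) - residual N C Q (i + 1)),
          sum_range_sub']
        rfl

theorem residual_lt_of_lastLevelGapBound {Δ : ℕ} (hΔ : LastLevelGapBound N C Δ) :
    residual N C Q d < Δ := by
  set m : Fin d := ⟨d - 1, Nat.sub_lt hd Nat.one_pos⟩
  obtain ⟨hvalid, -⟩ := validPrefix_partState_and_residual_lt hd hZero hHC hQ m
  obtain ⟨hxN, hxR, hRx⟩ := greedyCoord_bracket hd hZero hHC hQ m
  have hlast : C m _ (greedyCoord N C Q m + 1) - C m _ (greedyCoord N C Q m) ≤ Δ :=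
    hΔ hd _ hvalid _ hxN
  have hres := residual_succ (N := N) (C := C) (Q := Q) m
  rw [show (m : ℕ) + 1 = d from Nat.sub_add_cancel hd] at hres
  omega

end FindPartition

theorem stmt7_general {d : ℕ} (hd : 0 < d) {N : Fin d → ℕ}
    (C : Fin d → (Fin d → ℕ) → ℕ → ℕ) (hPD : PrefixDep C)
    (hZero : IsZeroBased N C) (hHC : IsHierConsistent N C)
    (Δ : ℕ) (hΔ : LastLevelGapBound N C Δ)
    (Ql Qu : ℕ) (hle : Ql ≤ Qu) (hQu : Qu < C ⟨0, hd⟩ (fun _ => 0) (N ⟨0, hd⟩)) :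
    |((totalCost C (findPartition N C Qu) : ℤ) - (totalCost C (findPartition N C Ql) : ℤ))
        - ((Qu : ℤ) - (Ql : ℤ))| < (Δ : ℤ) := by
  have hQl := hle.trans_lt hQu
  have hRu := residual_lt_of_lastLevelGapBound hd hZero hHC hQu hΔ
  have hRl := residual_lt_of_lastLevelGapBound hd hZero hHC hQl hΔ
  rw [totalCost_findPartition hd hZero hHC hQu hPD, totalCost_findPartition hd hZero hHC hQl hPD,
    abs_lt]
  constructor <;> omega

/-- the cost of coiteration between the two returned boundaries differs from
the query gap `Q_u - Q_l` by less than `Δ` (as integers). -/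
theorem stmt7 {d : ℕ} (hd : 0 < d) {N : Fin d → ℕ} (hN : ∀ m, 1 ≤ N m)
    (C : Fin d → (Fin d → ℕ) → ℕ → ℕ) (hPD : PrefixDep C)
    (hMono : IsMonotoneFam N C) (hZero : IsZeroBased N C) (hHC : IsHierConsistent N C)
    (Δ : ℕ) (hΔ : LastLevelGapBound N C Δ)
    (Ql Qu : ℕ) (hle : Ql ≤ Qu) (hQu : Qu < C ⟨0, hd⟩ (fun _ => 0) (N ⟨0, hd⟩)) :
    |((totalCost C (findPartition N C Qu) : ℤ) - (totalCost C (findPartition N C Ql) : ℤ))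
        - ((Qu : ℤ) - (Ql : ℤ))| < (Δ : ℤ) :=
  stmt7_general hd C hPD hZero hHC Δ hΔ Ql Qu hle hQu

end Nacho
end
end

section
/- Let S_1, …, S_t be finite sets of coordinate tuples with Q* = Σ_{i=1}^t |S_i| ≥ 1, and let C be their summed count family. Then C_0(N 0) = Q*, and for every natural number Q < Q*, the tuple x̄ = FindPartition(Q) computed with respect to C satisfies n(x̄) ≤ Q and Q − n(x̄) < t, where n(x̄) = Σ_{i=1}^t (the number of c ∈ S_i with c <lex x̄); that is, the returned partition boundary encloses the queried number of nonzeros up to an error less than the number of coiterated tensors. -/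
noncomputable section

open scoped Classical
open Finset

namespace Nacho

section Aux

variable {d t : ℕ} {N : Fin d → ℕ}

lemma countCost_zero (S : Finset ((m : Fin d) → Fin (N m))) (m : Fin d) (p : Fin d → ℕ) :
    countCost N S m p 0 = 0 := by
  simp [countCost]

lemma countCost_prefixDep (S : Finset ((m : Fin d) → Fin (N m))) (m : Fin d)
    (p p' : Fin d → ℕ) (x : ℕ) (h : ∀ k : Fin d, (k : ℕ) < (m : ℕ) → p k = p' k) :
    countCost N S m p x = countCost N S m p' x := by
  unfold countCost
  congr 1
  apply Finset.filter_congr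
  intro c _
  constructor
  · rintro ⟨h1, h2⟩; exact ⟨fun k hk => (h1 k hk).trans (h k hk), h2⟩
  · rintro ⟨h1, h2⟩; exact ⟨fun k hk => (h1 k hk).trans (h k hk).symm, h2⟩

/-- Per-set "slab" count at level `m` with coordinate exactly `x`. -/
def slab (S : Finset ((m : Fin d) → Fin (N m))) (m : Fin d) (p : Fin d → ℕ) (x : ℕ) :
    Finset ((m : Fin d) → Fin (N m)) :=
  S.filter fun c => (∀ k : Fin d, (k : ℕ) < (m : ℕ) → (c k : ℕ) = p k) ∧ (c m : ℕ) = x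

lemma countCost_succ (S : Finset ((m : Fin d) → Fin (N m))) (m : Fin d) (p : Fin d → ℕ)
    (x : ℕ) :
    countCost N S m p (x + 1) = countCost N S m p x + (slab S m p x).card := by
  unfold countCost slab
  rw [← Finset.card_union_of_disjoint]
  · congr 1
    rw [← Finset.filter_or]
    apply Finset.filter_congr
    intro c _
    simp only [Nat.lt_succ_iff_lt_or_eq]
    tauto
  · simp only [Finset.disjoint_left, Finset.mem_filter]
    rintro c ⟨_, _, h1⟩ ⟨_, _, h2⟩
    omega

lemma countCost_hier (S : Finset ((m : Fin d) → Fin (N m))) (m : ℕ) (hm : m < d)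
    (h1 : m + 1 < d) (p : Fin d → ℕ) (x : ℕ) :
    countCost N S ⟨m + 1, h1⟩ (Function.update p ⟨m, hm⟩ x) (N ⟨m + 1, h1⟩)
      = (slab S ⟨m, hm⟩ p x).card := by
  unfold countCost slab
  congr 1
  apply Finset.filter_congr
  intro c _
  constructor
  · rintro ⟨h2, -⟩
    refine ⟨fun k hk => ?_, ?_⟩
    · have hk' : (k : ℕ) < m := by simpa using hk
      have hne : k ≠ ⟨m, hm⟩ := by simp only [ne_eq, Fin.ext_iff]; omega
      have hh := h2 k (by simpa using Nat.lt_succ_of_lt hk')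
      rwa [Function.update_of_ne hne] at hh
    · have hh := h2 ⟨m, hm⟩ (by simp)
      rwa [Function.update_self] at hh
  · rintro ⟨h2, h3⟩
    refine ⟨fun k hk => ?_, (c ⟨m + 1, h1⟩).is_lt⟩
    simp only at hk
    rcases Nat.lt_succ_iff_lt_or_eq.mp hk with hk | hk
    · have hne : k ≠ ⟨m, hm⟩ := by simp only [ne_eq, Fin.ext_iff]; omega
      rw [Function.update_of_ne hne]
      exact h2 k (by simpa using hk)
    · have hkm : k = ⟨m, hm⟩ := Fin.ext hk
      rw [hkm, Function.update_self]
      exact h3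

lemma slab_card_le_one (S : Finset ((m : Fin d) → Fin (N m))) (m : ℕ) (hmlt : m < d)
    (hm : m + 1 = d) (p : Fin d → ℕ) (x : ℕ) :
    (slab S ⟨m, hmlt⟩ p x).card ≤ 1 := by
  apply Finset.card_le_one.mpr
  intro a ha b hb
  simp only [slab, Finset.mem_filter] at ha hb
  funext k
  apply Fin.ext
  rcases lt_or_ge (k : ℕ) m with hk | hk
  · rw [ha.2.1 k (by simpa using hk), hb.2.1 k (by simpa using hk)]
  · have hkd : (k : ℕ) < d := k.isLt
    have hkm : k = ⟨m, hmlt⟩ := Fin.ext (show (k : ℕ) = m by omega)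
    rw [hkm, ha.2.2, hb.2.2]

variable (S : Fin t → Finset ((m : Fin d) → Fin (N m)))

lemma summedCost_zero (m : Fin d) (p : Fin d → ℕ) : summedCost N S m p 0 = 0 := by
  unfold summedCost
  simp [countCost_zero]

lemma summedCost_prefixDep (m : Fin d) (p p' : Fin d → ℕ) (x : ℕ)
    (h : ∀ k : Fin d, (k : ℕ) < (m : ℕ) → p k = p' k) :
    summedCost N S m p x = summedCost N S m p' x :=
  Finset.sum_congr rfl fun i _ => countCost_prefixDep (S i) m p p' x h

lemma summedCost_succ (m : Fin d) (p : Fin d → ℕ) (x : ℕ) :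
    summedCost N S m p (x + 1) = summedCost N S m p x + ∑ i, (slab (S i) m p x).card := by
  unfold summedCost
  rw [← Finset.sum_add_distrib]
  exact Finset.sum_congr rfl fun i _ => countCost_succ (S i) m p x

lemma summedCost_hier (m : ℕ) (hm : m < d) (h1 : m + 1 < d) (p : Fin d → ℕ) (x : ℕ) :
    summedCost N S ⟨m + 1, h1⟩ (Function.update p ⟨m, hm⟩ x) (N ⟨m + 1, h1⟩)
      = ∑ i, (slab (S i) ⟨m, hm⟩ p x).card :=
  Finset.sum_congr rfl fun i _ => countCost_hier (S i) m hm h1 p x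

lemma slab_sum_le (m : ℕ) (hmlt : m < d) (hm : m + 1 = d) (p : Fin d → ℕ) (x : ℕ) :
    ∑ i, (slab (S i) ⟨m, hmlt⟩ p x).card ≤ t := by
  calc ∑ i, (slab (S i) ⟨m, hmlt⟩ p x).card ≤ ∑ _i : Fin t, 1 :=
        Finset.sum_le_sum fun i _ => slab_card_le_one (S i) m hmlt hm p x
    _ = t := by simp

lemma summedCost_top (hd : 0 < d) (p : Fin d → ℕ) :
    summedCost N S ⟨0, hd⟩ p (N ⟨0, hd⟩) = ∑ i, (S i).card := by
  unfold summedCost countCost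
  refine Finset.sum_congr rfl fun i _ => ?_
  congr 1
  apply Finset.filter_true_of_mem
  intro c _
  exact ⟨fun k hk => by simp at hk, (c ⟨0, hd⟩).is_lt⟩

/-! ### partState facts -/

lemma partState_succ_lt (C : Fin d → (Fin d → ℕ) → ℕ → ℕ) (Q : ℕ) (m : ℕ) (hm : m < d) :
    partState N C Q (m + 1) =
      (Function.update (partState N C Q m).1 ⟨m, hm⟩
        (Nat.findGreatest (fun y => C ⟨m, hm⟩ (partState N C Q m).1 y ≤ (partState N C Q m).2)
          (N ⟨m, hm⟩ - 1)),
       (partState N C Q m).2 -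
        C ⟨m, hm⟩ (partState N C Q m).1
          (Nat.findGreatest (fun y => C ⟨m, hm⟩ (partState N C Q m).1 y ≤ (partState N C Q m).2)
            (N ⟨m, hm⟩ - 1))) := by
  show partStep N C m (partState N C Q m) = _
  rw [partStep, dif_pos hm]

lemma partState_succ_ge (C : Fin d → (Fin d → ℕ) → ℕ → ℕ) (Q : ℕ) (m : ℕ) (hm : ¬ m < d) :
    partState N C Q (m + 1) = partState N C Q m := by
  show partStep N C m (partState N C Q m) = _
  rw [partStep, dif_neg hm]

lemma partState_fst_stable (C : Fin d → (Fin d → ℕ) → ℕ → ℕ) (Q : ℕ) (m j : ℕ) (hmj : m ≤ j)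
    (k : Fin d) (hk : (k : ℕ) < m) :
    (partState N C Q j).1 k = (partState N C Q m).1 k := by
  induction j with
  | zero => omega
  | succ j ih =>
    rcases Nat.eq_or_lt_of_le hmj with h | h
    · rw [h]
    · have hmj' : m ≤ j := by omega
      by_cases hjd : j < d
      · rw [partState_succ_lt (N := N) C Q j hjd]
        simp only
        rw [Function.update_of_ne (by simp [Fin.ext_iff]; omega)]
        exact ih hmj'
      · rw [partState_succ_ge C Q j hjd]
        exact ih hmj'

lemma findPartition_val (hN : ∀ m, 1 ≤ N m) (C : Fin d → (Fin d → ℕ) → ℕ → ℕ) (Q : ℕ)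
    (m : ℕ) (hm : m < d) :
    findPartition N C Q ⟨m, hm⟩ =
      Nat.findGreatest (fun y => C ⟨m, hm⟩ (partState N C Q m).1 y ≤ (partState N C Q m).2)
        (N ⟨m, hm⟩ - 1) := by
  unfold findPartition
  rw [partState_fst_stable (N := N) C Q (m + 1) d (by omega) ⟨m, hm⟩ (by simp),
    partState_succ_lt (N := N) C Q m hm]
  simp

end Aux

lemma main_inv {d t : ℕ} (hd : 0 < d) {N : Fin d → ℕ} (hN : ∀ m, 1 ≤ N m)
    (S : Fin t → Finset ((m : Fin d) → Fin (N m)))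
    (Q : ℕ) (hQ : Q < ∑ i, (S i).card) :
    ∀ m : ℕ, m ≤ d →
      ((∑ i, ((S i).filter fun c => ∃ k : Fin d, (k : ℕ) < m ∧
          (∀ j : Fin d, (j : ℕ) < (k : ℕ) → (c j : ℕ) = findPartition N (summedCost N S) Q j) ∧
          (c k : ℕ) < findPartition N (summedCost N S) Q k).card)
        + (partState N (summedCost N S) Q m).2 = Q)
      ∧ (∀ hm : m < d,
          (partState N (summedCost N S) Q m).2
            < summedCost N S ⟨m, hm⟩ (partState N (summedCost N S) Q m).1 (N ⟨m, hm⟩))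
      ∧ (m = d → (partState N (summedCost N S) Q m).2 < t) := by
  set C := summedCost N S with hCdef
  intro m
  induction m with
  | zero =>
    intro _
    refine ⟨by simp [partState], fun hm => ?_, fun h => by omega⟩
    show Q < _
    rw [hCdef, summedCost_top S hm]
    exact hQ
  | succ m ih =>
    intro hm1
    have hm : m < d := by omega
    obtain ⟨ihA, ihB, -⟩ := ih (by omega)
    clear ih
    set p := (partState N C Q m).1 with hp
    set R := (partState N C Q m).2 with hR
    set x := Nat.findGreatest (fun y => C ⟨m, hm⟩ p y ≤ R) (N ⟨m, hm⟩ - 1) with hxdef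
    set xf := findPartition N C Q with hxf
    have hstep := partState_succ_lt (N := N) C Q m hm
    have hs1 : (partState N C Q (m + 1)).1 = Function.update p ⟨m, hm⟩ x := by
      rw [hstep]
    have hs2 : (partState N C Q (m + 1)).2 = R - C ⟨m, hm⟩ p x := by
      rw [hstep]
    clear_value C p R x xf
    have hx0 : C ⟨m, hm⟩ p 0 ≤ R := by
      rw [hCdef, summedCost_zero]; exact Nat.zero_le _
    have hxle : C ⟨m, hm⟩ p x ≤ R := by
      rw [hxdef]
      exact Nat.findGreatest_spec (P := fun y => C ⟨m, hm⟩ p y ≤ R) (Nat.zero_le _) hx0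
    have hxlt : x < N ⟨m, hm⟩ := by
      clear ihA
      have h1 := Nat.findGreatest_le (P := fun y => C ⟨m, hm⟩ p y ≤ R) (N ⟨m, hm⟩ - 1)
      have h2 := hN ⟨m, hm⟩
      omega
    have hgt : R < C ⟨m, hm⟩ p (x + 1) := by
      clear ihA
      rcases lt_or_ge (x + 1) (N ⟨m, hm⟩) with h | h
      · have h3 := Nat.findGreatest_is_greatest (P := fun y => C ⟨m, hm⟩ p y ≤ R)
          (n := N ⟨m, hm⟩ - 1) (k := x + 1) (by omega) (by omega)
        omega
      · have hxe : x + 1 = N ⟨m, hm⟩ := by omega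
        rw [hxe]
        exact ihB hm
    have hxfm : xf ⟨m, hm⟩ = x := by
      rw [hxf, hxdef, hp, hR]
      exact findPartition_val hN C Q m hm
    have hpf : ∀ j : Fin d, (j : ℕ) < m → xf j = p j := by
      intro j hj
      rw [hxf]
      rw [hp]
      exact partState_fst_stable (N := N) C Q m d hm.le j hj
    have hgap := summedCost_succ S ⟨m, hm⟩ p x
    rw [← hCdef] at hgap
    -- the sum of "G" filters equals `C ⟨m,hm⟩ p x`
    have hG : (∑ i, ((S i).filter fun c =>
          (∀ j : Fin d, (j : ℕ) < m → (c j : ℕ) = xf j) ∧ (c ⟨m, hm⟩ : ℕ) < x).card)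
        = C ⟨m, hm⟩ p x := by
      have h1 : (∑ i, ((S i).filter fun c =>
            (∀ j : Fin d, (j : ℕ) < m → (c j : ℕ) = xf j) ∧ (c ⟨m, hm⟩ : ℕ) < x).card)
          = summedCost N S ⟨m, hm⟩ xf x := by
        refine Finset.sum_congr rfl fun i _ => ?_
        unfold countCost
        congr 1
      rw [h1, hCdef]
      exact summedCost_prefixDep S ⟨m, hm⟩ xf p x (fun k hk => hpf k (by simpa using hk))
    have hsplit : ∀ i : Fin t,
        ((S i).filter fun c => ∃ k : Fin d, (k : ℕ) < m + 1 ∧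
            (∀ j : Fin d, (j : ℕ) < (k : ℕ) → (c j : ℕ) = xf j) ∧ (c k : ℕ) < xf k).card
        = ((S i).filter fun c => ∃ k : Fin d, (k : ℕ) < m ∧
            (∀ j : Fin d, (j : ℕ) < (k : ℕ) → (c j : ℕ) = xf j) ∧ (c k : ℕ) < xf k).card
          + ((S i).filter fun c =>
            (∀ j : Fin d, (j : ℕ) < m → (c j : ℕ) = xf j) ∧ (c ⟨m, hm⟩ : ℕ) < x).card := by
      clear ihA
      intro i
      rw [← Finset.card_union_of_disjoint]
      · congr 1
        rw [← Finset.filter_or]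
        apply Finset.filter_congr
        intro c _
        constructor
        · rintro ⟨k, hk, h1, h2⟩
          rcases Nat.lt_succ_iff_lt_or_eq.mp hk with hk | hk
          · exact Or.inl ⟨k, hk, h1, h2⟩
          · right
            have hkm : k = ⟨m, hm⟩ := Fin.ext hk
            subst hkm
            exact ⟨fun j hj => h1 j hj, by rwa [hxfm] at h2⟩
        · rintro (⟨k, hk, h1, h2⟩ | ⟨h1, h2⟩)
          · exact ⟨k, Nat.lt_succ_of_lt hk, h1, h2⟩
          · exact ⟨⟨m, hm⟩, Nat.lt_succ_self m, fun j hj => h1 j hj,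
              by rwa [hxfm]⟩
      · simp only [Finset.disjoint_left, Finset.mem_filter]
        rintro c ⟨-, k, hk, -, h2⟩ ⟨-, h3, -⟩
        rw [h3 k hk] at h2
        exact lt_irrefl _ h2
    refine ⟨?_, fun hm1' => ?_, fun hEq => ?_⟩
    · rw [hs2]
      have hsum2 : (∑ i, ((S i).filter fun c => ∃ k : Fin d, (k : ℕ) < m + 1 ∧
            (∀ j : Fin d, (j : ℕ) < (k : ℕ) → (c j : ℕ) = xf j) ∧ (c k : ℕ) < xf k).card)
          = (∑ i, ((S i).filter fun c => ∃ k : Fin d, (k : ℕ) < m ∧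
              (∀ j : Fin d, (j : ℕ) < (k : ℕ) → (c j : ℕ) = xf j) ∧ (c k : ℕ) < xf k).card)
            + (∑ i, ((S i).filter fun c =>
              (∀ j : Fin d, (j : ℕ) < m → (c j : ℕ) = xf j) ∧ (c ⟨m, hm⟩ : ℕ) < x).card) := by
        rw [← Finset.sum_add_distrib]
        exact Finset.sum_congr rfl fun i _ => hsplit i
      rw [hsum2, hG, Nat.add_assoc, Nat.add_sub_cancel' hxle]
      exact ihA
    · clear ihA hsplit hG
      have hh := summedCost_hier S m hm hm1' p x
      rw [← hCdef] at hh
      rw [hs2, hs1, hh]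
      omega
    · clear ihA hsplit hG
      rw [hs2]
      have hle := slab_sum_le S m hm hEq p x
      omega

/-- for the summed count family, the total cost of the whole space is
`Q* = ∑ᵢ |Sᵢ|`, and for every query `Q < Q*` the boundary returned by `FindPartition`
encloses `n(x̄) ≤ Q` nonzeros, with `Q - n(x̄) < t`. -/
theorem stmt12 {d : ℕ} (hd : 0 < d) {N : Fin d → ℕ} (hN : ∀ m, 1 ≤ N m)
    {t : ℕ} (S : Fin t → Finset ((m : Fin d) → Fin (N m)))
    (hQstar : 1 ≤ ∑ i, (S i).card) :
    summedCost N S ⟨0, hd⟩ (fun _ => 0) (N ⟨0, hd⟩) = (∑ i, (S i).card) ∧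
    ∀ Q : ℕ, Q < ∑ i, (S i).card →
      (∑ i, ((S i).filter fun c =>
          LexLt (fun m => (c m : ℕ)) (findPartition N (summedCost N S) Q)).card) ≤ Q ∧
      Q - (∑ i, ((S i).filter fun c =>
          LexLt (fun m => (c m : ℕ)) (findPartition N (summedCost N S) Q)).card) < t := by
  constructor
  · exact summedCost_top S hd _
  · intro Q hQ
    obtain ⟨hA, -, hC⟩ := main_inv hd hN S Q hQ d le_rfl
    have hCd := hC rfl
    have hEq : (∑ i, ((S i).filter fun c =>
          LexLt (fun m => (c m : ℕ)) (findPartition N (summedCost N S) Q)).card)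
        = ∑ i, ((S i).filter fun c => ∃ k : Fin d, (k : ℕ) < d ∧
            (∀ j : Fin d, (j : ℕ) < (k : ℕ) →
              (c j : ℕ) = findPartition N (summedCost N S) Q j) ∧
            (c k : ℕ) < findPartition N (summedCost N S) Q k).card := by
      refine Finset.sum_congr rfl fun i _ => ?_
      congr 1
      apply Finset.filter_congr
      intro c _
      unfold LexLt
      constructor
      · rintro ⟨k, h1, h2⟩; exact ⟨k, k.isLt, h1, h2⟩
      · rintro ⟨k, -, h1, h2⟩; exact ⟨k, h1, h2⟩
    rw [hEq]
    constructor
    · exact Nat.le.intro hA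
    · have h2 : Q - (∑ i, ((S i).filter fun c => ∃ k : Fin d, (k : ℕ) < d ∧
            (∀ j : Fin d, (j : ℕ) < (k : ℕ) →
              (c j : ℕ) = findPartition N (summedCost N S) Q j) ∧
            (c k : ℕ) < findPartition N (summedCost N S) Q k).card)
          = (partState N (summedCost N S) Q d).2 :=
        Nat.sub_eq_of_eq_add (hA.symm.trans (Nat.add_comm _ _))
      rw [h2]
      exact hCd

end Nacho
end
end
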